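/- arXiv:1708.04152 — 2 statements merged into one kernel-verified Lean document; each statement's English description precedes it below -/
import Mathlib

section
/- Under the hypotheses of the explicit function theorem (u₊, u₋ convex with ∂u₊(Λ) ⊂ Ω̄₊, ∂u₋(Λ) ⊂ Ω̄₋, the compact sets Ω̄₊ and Ω̄₋ strongly separated by the hyperplane {xⁿ = a₀} with spacing d₀), the functions h₊(x') := −u*_{x'}(a₀ − d₀)/(2d₀) and h₋(x') := −u*_{x'}(a₀ + d₀)/(2d₀), defined for x' in the projection of Λ and +∞ elsewhere, are both convex functions on ℝ^{n−1} which are finite on the projection Λ' of Λ. In particular, the interface function h = h₊ − h₋ is a DC (difference of convex) function on Λ'. -/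
/-!
Convex functions on `ℝⁿ⁺¹` have subgradients everywhere (separate `(x, f x)` from the open
strict epigraph). At `x ∈ Λ` the subgradients of `u₊` and `u₋` have last coordinates on opposite
sides of every `s ∈ [a₀ − d₀, a₀ + d₀]`, so `t ↦ t s − u(x', t)` is bounded above by the supporting
line of `u₊` for `t ≥ xⁿ` and by that of `u₋` for `t ≤ xⁿ`. Moreover `(x', t) ↦ t s − u(x', t)`
is jointly concave, and a supremum over one variable of a jointly concave function is concave in
the remaining ones; hence `−u*_{x'}(s)` is convex on `Λ'`.
-/

open Set

noncomputable section

/-- The subdifferential of `f : ℝⁿ → ℝ` at `x`. -/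
def subdiff {n : ℕ} (f : EuclideanSpace ℝ (Fin n) → ℝ) (x : EuclideanSpace ℝ (Fin n)) :
    Set (EuclideanSpace ℝ (Fin n)) :=
  {p | ∀ y, f x + inner ℝ p (y - x) ≤ f y}

/-- Append a last coordinate `t` to `x' ∈ ℝⁿ`, giving a point of `ℝⁿ⁺¹`. -/
def snocPt {n : ℕ} (x' : EuclideanSpace ℝ (Fin n)) (t : ℝ) :
    EuclideanSpace ℝ (Fin (n + 1)) :=
  (EuclideanSpace.equiv (Fin (n + 1)) ℝ).symm (Fin.snoc (fun i => x' i) t)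

/-- Projection onto the first `n` coordinates. -/
def projPt {n : ℕ} (x : EuclideanSpace ℝ (Fin (n + 1))) : EuclideanSpace ℝ (Fin n) :=
  (EuclideanSpace.equiv (Fin n) ℝ).symm (fun i => x i.castSucc)

/-- The partial Legendre transform, in the last variable, of `u = max {u₊, u₋}`. -/
def Lstar {n : ℕ} (up um : EuclideanSpace ℝ (Fin (n + 1)) → ℝ)
    (x' : EuclideanSpace ℝ (Fin n)) (s : ℝ) : ℝ :=
  sSup (Set.range fun t : ℝ => t * s - max (up (snocPt x' t)) (um (snocPt x' t)))

theorem ConvexOn.exists_strongDual_le {E : Type*} [NormedAddCommGroup E] [NormedSpace ℝ E]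
    [FiniteDimensional ℝ E] {f : E → ℝ} (hf : ConvexOn ℝ univ f) (x : E) :
    ∃ ℓ : StrongDual ℝ E, ∀ y, f x + ℓ (y - x) ≤ f y := by
  have hcont : Continuous f := continuousOn_univ.mp (hf.continuousOn isOpen_univ)
  obtain ⟨F, hF⟩ := geometric_hahn_banach_point_open hf.convex_strict_epigraph
    (by simpa using isOpen_lt (hcont.comp continuous_fst) continuous_snd) (x := (x, f x))
    (by simp)
  set c := F (0, 1)
  have hF_apply : ∀ y r, F (y, r) = F (y, 0) + r * c := by
    intro y r
    rw [show (y, r) = (y, 0) + r • ((0 : E), (1 : ℝ)) by simp, map_add, map_smul, smul_eq_mul]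
  have hc : 0 < c := by
    have h := hF (x, f x + 1) (by simp)
    rw [hF_apply x (f x), hF_apply x (f x + 1)] at h
    linarith
  have hsep : ∀ y, F (x, 0) - F (y, 0) ≤ (f y - f x) * c := by
    refine fun y => le_of_forall_pos_lt_add fun ε hε => ?_
    have h := hF (y, f y + ε / c) <| by
      simp only [mem_univ, true_and, mem_ofPred_eq, lt_add_iff_pos_right]; positivity
    rw [hF_apply x (f x), hF_apply y, add_mul, div_mul_cancel₀ ε hc.ne'] at h
    linarith
  refine ⟨-c⁻¹ • F.comp (ContinuousLinearMap.inl ℝ E ℝ), fun y => ?_⟩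
  have hℓ : (-c⁻¹ • F.comp (ContinuousLinearMap.inl ℝ E ℝ)) (y - x)
      = (F (x, 0) - F (y, 0)) / c := by
    simp only [map_sub, smul_apply, ContinuousLinearMap.comp_apply,
      ContinuousLinearMap.inl_apply, smul_eq_mul]
    ring
  rw [hℓ, ← le_sub_iff_add_le', div_le_iff₀ hc]
  exact hsep y

theorem subdiff_nonempty {m : ℕ} {f : EuclideanSpace ℝ (Fin m) → ℝ} (hf : ConvexOn ℝ univ f)
    (x : EuclideanSpace ℝ (Fin m)) : (subdiff f x).Nonempty := by
  obtain ⟨ℓ, hℓ⟩ := hf.exists_strongDual_le x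
  exact ⟨(InnerProductSpace.toDual ℝ _).symm ℓ, fun y => by
    simpa only [InnerProductSpace.toDual_symm_apply] using hℓ y⟩

theorem bddAbove_range_mul_sub_of_affine_le {g : ℝ → ℝ} {t₀ α β p q s : ℝ} (hqs : q ≤ s)
    (hsp : s ≤ p) (hp : ∀ t, α + p * (t - t₀) ≤ g t) (hq : ∀ t, β + q * (t - t₀) ≤ g t) :
    BddAbove (range fun t => t * s - g t) := by
  refine ⟨t₀ * s - min α β, ?_⟩
  rintro _ ⟨t, rfl⟩
  rcases le_total t₀ t with ht | ht
  · nlinarith [hp t, min_le_left α β]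
  · nlinarith [hq t, min_le_right α β]

section LastCoordinate

variable {n : ℕ}

theorem snocPt_projPt (x : EuclideanSpace ℝ (Fin (n + 1))) :
    snocPt (projPt x) (x (Fin.last n)) = x := by
  ext i
  cases i using Fin.lastCases with
  | last => simp [snocPt]
  | cast i => simp [snocPt, projPt]

theorem isLinearMap_projPt : IsLinearMap ℝ (projPt (n := n)) := by
  constructor <;> intros <;> ext <;> simp [projPt]

theorem isLinearMap_snocPt :
    IsLinearMap ℝ fun p : EuclideanSpace ℝ (Fin n) × ℝ => snocPt p.1 p.2 := by
  constructor <;> intros <;> ext i <;> cases i using Fin.lastCases <;> simp [snocPt]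

theorem inner_snocPt_sub_snocPt (p : EuclideanSpace ℝ (Fin (n + 1)))
    (x' : EuclideanSpace ℝ (Fin n)) (t t₀ : ℝ) :
    inner ℝ p (snocPt x' t - snocPt x' t₀) = p (Fin.last n) * (t - t₀) := by
  rw [PiLp.inner_apply, Fin.sum_univ_castSucc]
  simp [snocPt, RCLike.inner_apply, mul_comm]

theorem add_mul_sub_le_of_mem_subdiff {f : EuclideanSpace ℝ (Fin (n + 1)) → ℝ}
    {x p : EuclideanSpace ℝ (Fin (n + 1))} (hp : p ∈ subdiff f x) (t : ℝ) :
    f x + p (Fin.last n) * (t - x (Fin.last n)) ≤ f (snocPt (projPt x) t) := by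
  have h := hp (snocPt (projPt x) t)
  rwa [← inner_snocPt_sub_snocPt, snocPt_projPt]

theorem bddAbove_range_mul_sub_max {up um : EuclideanSpace ℝ (Fin (n + 1)) → ℝ}
    {x p q : EuclideanSpace ℝ (Fin (n + 1))} {s : ℝ} (hp : p ∈ subdiff up x)
    (hq : q ∈ subdiff um x) (hqs : q (Fin.last n) ≤ s) (hsp : s ≤ p (Fin.last n)) :
    BddAbove (range fun t : ℝ =>
      t * s - max (up (snocPt (projPt x) t)) (um (snocPt (projPt x) t))) :=
  bddAbove_range_mul_sub_of_affine_le hqs hsp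
    (fun t => (add_mul_sub_le_of_mem_subdiff hp t).trans (le_max_left _ _))
    (fun t => (add_mul_sub_le_of_mem_subdiff hq t).trans (le_max_right _ _))

end LastCoordinate

theorem ConcaveOn.ciSup_of_uncurry {E : Type*} [AddCommGroup E] [Module ℝ E] {s : Set E}
    (hs : Convex ℝ s) {g : E → ℝ → ℝ} (hg : ConcaveOn ℝ univ (Function.uncurry g))
    (hbdd : ∀ x ∈ s, BddAbove (range (g x))) : ConcaveOn ℝ s fun x => ⨆ t, g x t := by
  refine ⟨hs, fun x hx y hy a b ha hb hab => ?_⟩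
  set M := ⨆ t, g (a • x + b • y) t
  have joint : ∀ t₁ t₂, a * g x t₁ + b * g y t₂ ≤ M := fun t₁ t₂ =>
    (hg.2 (mem_univ (x, t₁)) (mem_univ (y, t₂)) ha hb hab).trans
      (le_ciSup (hbdd _ (hs hx hy ha hb hab)) (a * t₁ + b * t₂))
  have hsup_y : ∀ t₁, ⨆ t₂, b * g y t₂ ≤ M - a * g x t₁ := fun t₁ =>
    ciSup_le fun t₂ => by linarith [joint t₁ t₂]
  have hsup_x : ⨆ t₁, a * g x t₁ ≤ M - ⨆ t₂, b * g y t₂ :=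
    ciSup_le fun t₁ => by linarith [hsup_y t₁]
  rw [smul_eq_mul, smul_eq_mul, Real.mul_iSup_of_nonneg ha, Real.mul_iSup_of_nonneg hb]
  linarith

theorem concaveOn_Lstar {n : ℕ} {up um : EuclideanSpace ℝ (Fin (n + 1)) → ℝ}
    (hup : ConvexOn ℝ univ up) (hum : ConvexOn ℝ univ um) {Λ' : Set (EuclideanSpace ℝ (Fin n))}
    (hΛ' : Convex ℝ Λ') {s : ℝ} (hbdd : ∀ x' ∈ Λ', BddAbove (range fun t : ℝ =>
      t * s - max (up (snocPt x' t)) (um (snocPt x' t)))) :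
    ConcaveOn ℝ Λ' fun x' => Lstar up um x' s :=
  ConcaveOn.ciSup_of_uncurry hΛ'
    ((((LinearMap.snd ℝ _ ℝ).smulRight s).concaveOn convex_univ).sub
      ((hup.sup hum).comp_linearMap isLinearMap_snocPt.mk')) hbdd

theorem explicit_function_convex_pieces_general (n : ℕ)
    (up um : EuclideanSpace ℝ (Fin (n + 1)) → ℝ)
    (Λ Ωp Ωm : Set (EuclideanSpace ℝ (Fin (n + 1))))
    (hup : ConvexOn ℝ univ up) (hum : ConvexOn ℝ univ um)
    (hΛ : Convex ℝ Λ)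
    (hsubp : ∀ x ∈ Λ, subdiff up x ⊆ Ωp) (hsubm : ∀ x ∈ Λ, subdiff um x ⊆ Ωm)
    (a₀ d₀ : ℝ) (hd₀ : 0 < d₀)
    (hsepm : ∀ p ∈ Ωm, p (Fin.last n) < a₀ - d₀)
    (hsepp : ∀ p ∈ Ωp, a₀ + d₀ < p (Fin.last n)) :
    (∀ x' ∈ projPt '' Λ, ∀ s ∈ ({a₀ - d₀, a₀ + d₀} : Set ℝ),
        BddAbove (Set.range fun t : ℝ =>
          t * s - max (up (snocPt x' t)) (um (snocPt x' t)))) ∧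
    ConvexOn ℝ (projPt '' Λ) (fun x' => -(Lstar up um x' (a₀ - d₀)) / (2 * d₀)) ∧
    ConvexOn ℝ (projPt '' Λ) (fun x' => -(Lstar up um x' (a₀ + d₀)) / (2 * d₀)) := by
  have hbdd : ∀ x' ∈ projPt '' Λ, ∀ s ∈ ({a₀ - d₀, a₀ + d₀} : Set ℝ),
      BddAbove (Set.range fun t : ℝ => t * s - max (up (snocPt x' t)) (um (snocPt x' t))) := by
    rintro _ ⟨x, hx, rfl⟩ s hs
    obtain ⟨p, hp⟩ := subdiff_nonempty hup x
    obtain ⟨q, hq⟩ := subdiff_nonempty hum x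
    have hp_last := hsepp p (hsubp x hx hp)
    have hq_last := hsepm q (hsubm x hx hq)
    apply bddAbove_range_mul_sub_max hp hq <;> rcases hs with rfl | rfl <;> linarith
  have hΛ' : Convex ℝ (projPt '' Λ) := hΛ.is_linear_image isLinearMap_projPt
  have hpiece : ∀ s ∈ ({a₀ - d₀, a₀ + d₀} : Set ℝ),
      ConvexOn ℝ (projPt '' Λ) fun x' => -(Lstar up um x' s) / (2 * d₀) := fun s hs => by
    have hconc := concaveOn_Lstar hup hum hΛ' fun x' hx' => hbdd x' hx' s hs
    simpa only [div_eq_inv_mul, Pi.neg_apply, smul_eq_mul] using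
      hconc.neg.smul (by positivity : (0 : ℝ) ≤ (2 * d₀)⁻¹)
  exact ⟨hbdd, hpiece _ (by simp), hpiece _ (by simp)⟩

/-- Explicit function theorem, convexity of the pieces `h₊`, `h₋`: the partial Legendre
transforms of `u = max {u₊, u₋}` at heights `a₀ ∓ d₀` are finite on the projection `Λ'` of
`Λ`, and the functions `h₊ = −u*_{x'}(a₀−d₀)/(2d₀)` and `h₋ = −u*_{x'}(a₀+d₀)/(2d₀)` are
convex on `Λ'`; in particular the interface `h = h₊ − h₋` is a DC function on `Λ'`. -/
theorem explicit_function_convex_pieces (n : ℕ)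
    (up um : EuclideanSpace ℝ (Fin (n + 1)) → ℝ)
    (Λ Ωp Ωm : Set (EuclideanSpace ℝ (Fin (n + 1))))
    (hup : ConvexOn ℝ univ up) (hum : ConvexOn ℝ univ um)
    (hΛ : Convex ℝ Λ) (hΩp : IsCompact Ωp) (hΩm : IsCompact Ωm)
    (hsubp : ∀ x ∈ Λ, subdiff up x ⊆ Ωp) (hsubm : ∀ x ∈ Λ, subdiff um x ⊆ Ωm)
    (a₀ d₀ : ℝ) (hd₀ : 0 < d₀)
    (hsepm : ∀ p ∈ Ωm, p (Fin.last n) < a₀ - d₀)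
    (hsepp : ∀ p ∈ Ωp, a₀ + d₀ < p (Fin.last n)) :
    (∀ x' ∈ projPt '' Λ, ∀ s ∈ ({a₀ - d₀, a₀ + d₀} : Set ℝ),
        BddAbove (Set.range fun t : ℝ =>
          t * s - max (up (snocPt x' t)) (um (snocPt x' t)))) ∧
    ConvexOn ℝ (projPt '' Λ) (fun x' => -(Lstar up um x' (a₀ - d₀)) / (2 * d₀)) ∧
    ConvexOn ℝ (projPt '' Λ) (fun x' => -(Lstar up um x' (a₀ + d₀)) / (2 * d₀)) :=
  explicit_function_convex_pieces_general n up um Λ Ωp Ωm hup hum hΛ hsubp hsubm a₀ d₀ hd₀ hsepm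
    hsepp
end
end

section
/- Let u = max_{i∈I} u_i as above (u_i convex, gradients valued in disjoint compact sets Ω̄_i), and fix k ≥ 1. Suppose every subcollection of k of the sets {conv hull images at each point} is affinely independent, in the sense that for every I' ⊂ I with #I' = k, the collection {ch(Ω̄_i)}_{i∈I'} is affinely independent. Then every point of multiplicity at least k lies in some set Σ↑_{I'} := {x : u(x) = u_i(x) for all i ∈ I'} with #I' = k; that is, M_{≥k} ⊆ ∪_{#I'=k} Σ↑_{I'}. -/
open Set

noncomputable section

/-- The multiplicity of `u` at `x` relative to the collection `Ω`: the number of indices `i`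
with `∂u(x) ∩ Ω i ≠ ∅`. -/
def mult {n K : ℕ} (u : EuclideanSpace ℝ (Fin n) → ℝ)
    (Ω : Fin K → Set (EuclideanSpace ℝ (Fin n))) (x : EuclideanSpace ℝ (Fin n)) : ℕ :=
  Set.ncard {i : Fin K | (subdiff u x ∩ Ω i).Nonempty}

/-!
Let `A` be the set of pieces active at `x`. Every subgradient of `u = maxᵢ uᵢ` at `x` lies in the
convex hull of `⋃_{j ∈ A} Ω j`: otherwise a separating direction `d` would make `u` grow faster
along `d` than every active piece can, while the inactive pieces stay strictly below `u` near `x`.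
So if `#A < k ≤ mult u Ω x`, some inactive `i` has a point `p ∈ ∂u(x) ∩ Ω i` which is a convex
combination of points `q j ∈ ch(Ω j)`, `j ∈ A`; completing `A ∪ {i}` to `k` indices gives an
affinely dependent family, contradicting the hypothesis.
-/

open Filter Topology MeasureTheory

theorem LocallyLipschitz.dense_differentiableAt {E F : Type*}
    [NormedAddCommGroup E] [NormedSpace ℝ E] [FiniteDimensional ℝ E]
    [NormedAddCommGroup F] [NormedSpace ℝ F] [FiniteDimensional ℝ F]
    {f : E → F} (hf : LocallyLipschitz f) : Dense {x | DifferentiableAt ℝ f x} := by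
  borelize E
  let μ : Measure E := Measure.addHaar
  refine dense_iff_inter_open.2 fun U hU ⟨x, hxU⟩ => ?_
  obtain ⟨C, t, ht, hC⟩ := hf x
  obtain ⟨V, hVsub, hV, hxV⟩ := mem_nhds_iff.1 (inter_mem ht (hU.mem_nhds hxU))
  have : (ae (μ.restrict V)).NeBot := ae_restrict_neBot.2 (hV.measure_pos μ ⟨x, hxV⟩).ne'
  obtain ⟨y, hyd, hyV⟩ := ((hC.mono (hVsub.trans inter_subset_left)).ae_differentiableWithinAt
    (μ := μ) hV.measurableSet |>.and (ae_restrict_mem hV.measurableSet)).exists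
  exact ⟨y, (hVsub hyV).2, hyd.differentiableAt (hV.mem_nhds hyV)⟩

theorem ConvexOn.add_fderiv_sub_le {E : Type*} [NormedAddCommGroup E] [NormedSpace ℝ E]
    {f : E → ℝ} (hf : ConvexOn ℝ univ f) {w : E} (hd : DifferentiableAt ℝ f w) (z : E) :
    f w + fderiv ℝ f w (z - w) ≤ f z := by
  have hline : HasDerivAt (f ∘ AffineMap.lineMap w z) (fderiv ℝ f w (z - w)) (0 : ℝ) := by
    refine HasFDerivAt.comp_hasDerivAt (0 : ℝ) ?_ AffineMap.hasDerivAt_lineMap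
    simpa using hd.hasFDerivAt
  have := (hf.comp_affineMap (AffineMap.lineMap w z)).le_slope_of_hasDerivAt
    (mem_univ 0) (mem_univ 1) zero_lt_one hline
  simpa [slope_def_field, le_sub_iff_add_le'] using this

/-- By Carathéodory, the hull is the image of the compact sets `Δₘ × sᵐ`, `m ≤ finrank ℝ E + 1`,
under `(w, z) ↦ ∑ wᵢ zᵢ`. -/
theorem IsCompact.convexHull {E : Type*} [NormedAddCommGroup E] [NormedSpace ℝ E]
    [FiniteDimensional ℝ E] {s : Set E} (hs : IsCompact s) : IsCompact (_root_.convexHull ℝ s) := by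
  have hcover : _root_.convexHull ℝ s = ⋃ m : Fin (Module.finrank ℝ E + 2),
      (fun wz : (Fin m → ℝ) × (Fin m → E) => ∑ i, wz.1 i • wz.2 i) ''
        (stdSimplex ℝ (Fin m) ×ˢ univ.pi fun _ => s) := by
    refine Subset.antisymm (fun x hx => ?_) (iUnion_subset fun m => ?_)
    · obtain ⟨ι, _, z, w, hzs, hz, hw0, hw1, rfl⟩ := eq_pos_convex_span_of_mem_convexHull hx
      have hcard : Fintype.card ι < Module.finrank ℝ E + 2 := by
        have := Submodule.finrank_le (vectorSpan ℝ (range z))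
        have := hz.card_le_finrank_succ
        omega
      let e := Fintype.equivFin ι
      refine mem_iUnion.2 ⟨⟨_, hcard⟩, (w ∘ e.symm, z ∘ e.symm),
        ⟨⟨fun i => (hw0 _).le, ?_⟩, fun i _ => hzs ⟨_, rfl⟩⟩, ?_⟩
      · exact (e.symm.sum_comp w).trans hw1
      · exact e.symm.sum_comp fun i => w i • z i
    · rintro _ ⟨⟨w, z⟩, ⟨⟨hw0, hw1⟩, hz⟩, rfl⟩
      exact (convex_convexHull ℝ s).sum_mem (fun i _ => hw0 i) hw1
        fun i _ => subset_convexHull ℝ s (hz i (mem_univ i))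
  rw [hcover]
  exact isCompact_iUnion fun m =>
    ((isCompact_stdSimplex _ _).prod (isCompact_univ_pi fun _ => hs)).image (by fun_prop)

theorem exists_mem_convexHull_image_of_mem_convexHull_biUnion {ι E : Type*} [DecidableEq ι]
    [AddCommGroup E] [Module ℝ E] {C : ι → Set E} {s : Finset ι}
    (hC : ∀ i ∈ s, (C i).Nonempty) {p : E} (hp : p ∈ convexHull ℝ (⋃ i ∈ s, C i)) :
    ∃ q : ι → E, (∀ i ∈ s, q i ∈ convexHull ℝ (C i)) ∧ p ∈ convexHull ℝ (q '' s) := by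
  induction s using Finset.induction_on generalizing p with
  | empty => simp at hp
  | insert a s has ih =>
    rw [Finset.set_biUnion_insert] at hp
    rcases s.eq_empty_or_nonempty with rfl | ⟨i, hi⟩
    · refine ⟨fun _ => p, fun i hi => ?_, subset_convexHull ℝ _ ⟨a, by simp⟩⟩
      rw [Finset.mem_singleton.1 hi]
      simpa using hp
    have hR : (⋃ i ∈ s, C i).Nonempty :=
      (hC i (Finset.mem_insert_of_mem hi)).mono (subset_biUnion_of_mem (u := C) hi)
    obtain ⟨c, hc, r, hr, hpcr⟩ := mem_convexJoin.1 <|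
      (convexHull_union (𝕜 := ℝ) (hC a (Finset.mem_insert_self a s)) hR) ▸ hp
    obtain ⟨q, hq, hrq⟩ := ih (fun i hi => hC i (Finset.mem_insert_of_mem hi)) hr
    refine ⟨Function.update q a c, fun i hi => ?_, ?_⟩
    · rcases Finset.mem_insert.1 hi with rfl | hi
      · simpa using hc
      · rw [Function.update_of_ne (ne_of_mem_of_not_mem hi has)]
        exact hq i hi
    · have himage : Function.update q a c '' ↑(insert a s) = insert c (q '' s) := by
        rw [Finset.coe_insert, image_insert_eq, Function.update_self,
          Set.image_congr fun i hi => Function.update_of_ne (ne_of_mem_of_not_mem hi has) c q]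
      rw [himage]
      exact (convex_convexHull ℝ _).segment_subset (subset_convexHull ℝ _ (mem_insert c _))
        (convexHull_mono (subset_insert c _) hrq) hpcr

theorem le_card_of_mem_convexHull_image {ι E : Type*} [Fintype ι] [DecidableEq ι]
    [AddCommGroup E] [Module ℝ E] {Ω : ι → Set E} (hΩ : ∀ i, (Ω i).Nonempty) {k : ℕ}
    (hk : k ≤ Fintype.card ι)
    (hai : ∀ I' : Finset ι, I'.card = k →
      ∀ p : I' → E, (∀ i, p i ∈ convexHull ℝ (Ω i.1)) → AffineIndependent ℝ p)
    {A : Finset ι} {q : ι → E} (hq : ∀ j ∈ A, q j ∈ convexHull ℝ (Ω j)) {i : ι} (hiA : i ∉ A)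
    {p : E} (hp : p ∈ convexHull ℝ (Ω i)) (hpq : p ∈ convexHull ℝ (q '' A)) : k ≤ A.card := by
  by_contra! hlt
  obtain ⟨I, hAI, -, hI⟩ := Finset.exists_subsuperset_card_eq (Finset.subset_univ (insert i A))
    ((Finset.card_insert_of_notMem hiA).trans_le hlt) hk
  let P : I → E := fun j => if j.1 ∈ A then q j else if j.1 = i then p else (hΩ j).some
  have hP : ∀ j, P j ∈ convexHull ℝ (Ω j.1) := fun j => by
    by_cases hjA : j.1 ∈ A
    · simpa [P, hjA] using hq j hjA
    by_cases hji : j.1 = i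
    · simpa [P, hji, hiA] using hp
    · simpa [P, hjA, hji] using subset_convexHull ℝ _ (hΩ j).some_mem
  have hi : i ∈ I := hAI (Finset.mem_insert_self i A)
  have hPi : P ⟨i, hi⟩ = p := by simp [P, hiA]
  have hqP : q '' A ⊆ P '' {j | j.1 ∈ A} := by
    rintro _ ⟨j, hj, rfl⟩
    exact ⟨⟨j, hAI (Finset.mem_insert_of_mem hj)⟩, hj, by simp [P, Finset.mem_coe.1 hj]⟩
  refine hiA <| ((hai I hI P hP).mem_affineSpan_iff ⟨i, hi⟩ {j | j.1 ∈ A}).1 ?_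
  rw [hPi]
  exact convexHull_subset_affineSpan _ (convexHull_mono hqP hpq)

section Subdifferential

variable {n : ℕ} {f : EuclideanSpace ℝ (Fin n) → ℝ}

theorem ConvexOn.gradient_mem_subdiff (hf : ConvexOn ℝ univ f) {x : EuclideanSpace ℝ (Fin n)}
    (hd : DifferentiableAt ℝ f x) : gradient f x ∈ subdiff f x := fun y => by
  simpa [gradient, InnerProductSpace.toDual_symm_apply] using hf.add_fderiv_sub_le hd y

theorem mem_subdiff_of_tendsto (hf : Continuous f) {x p : EuclideanSpace ℝ (Fin n)}
    {xs ps : ℕ → EuclideanSpace ℝ (Fin n)} (hx : Tendsto xs atTop (𝓝 x))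
    (hp : Tendsto ps atTop (𝓝 p)) (hmem : ∀ m, ps m ∈ subdiff f (xs m)) : p ∈ subdiff f x :=
  fun y => le_of_tendsto' (((hf.tendsto x).comp hx).add
    (hp.inner (tendsto_const_nhds.sub hx))) fun m => hmem m y

theorem ConvexOn.subdiff_inter_nonempty (hf : ConvexOn ℝ univ f)
    {Ω : Set (EuclideanSpace ℝ (Fin n))} (hΩ : IsCompact Ω)
    (hgrad : ∀ x, DifferentiableAt ℝ f x → gradient f x ∈ Ω) (x : EuclideanSpace ℝ (Fin n)) :
    (subdiff f x ∩ Ω).Nonempty := by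
  obtain ⟨xs, hxs, hlim⟩ := mem_closure_iff_seq_limit.1
    (hf.locallyLipschitz.dense_differentiableAt.closure_eq ▸ mem_univ x)
  obtain ⟨p, hpΩ, φ, hφ, hp⟩ := hΩ.tendsto_subseq fun m => hgrad _ (hxs m)
  exact ⟨p, mem_subdiff_of_tendsto hf.locallyLipschitz.continuous (hlim.comp hφ.tendsto_atTop) hp
    fun m => hf.gradient_mem_subdiff (hxs (φ m)), hpΩ⟩

end Subdifferential

theorem eventually_eq_imp_eq_of_le {X ι : Type*} [TopologicalSpace X] [Finite ι]
    {f : ι → X → ℝ} {u : X → ℝ} {x : X} (hf : ∀ i, ContinuousAt (f i) x)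
    (hle : ∀ i y, f i y ≤ u y) {m : ι} (hm : u x = f m x) :
    ∀ᶠ y in 𝓝 x, ∀ i, u y = f i y → u x = f i x := by
  refine eventually_all.2 fun i => ?_
  by_cases hi : u x = f i x
  · exact Eventually.of_forall fun _ _ => hi
  have hlt : f i x < f m x := hm ▸ (hle i x).lt_of_ne (Ne.symm hi)
  filter_upwards [(hf i).eventually_lt (hf m) hlt] with y hy hyi
  exact absurd (hyi ▸ hle m y) hy.not_ge

theorem subdiff_subset_convexHull_biUnion {n : ℕ} {ι : Type*} [Finite ι] [Nonempty ι]
    {f : ι → EuclideanSpace ℝ (Fin n) → ℝ} {Ω : ι → Set (EuclideanSpace ℝ (Fin n))}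
    (hf : ∀ i, Continuous (f i)) (hΩ : ∀ i, IsCompact (Ω i))
    (hsub : ∀ i y, (subdiff (f i) y ∩ Ω i).Nonempty)
    {u : EuclideanSpace ℝ (Fin n) → ℝ} (hu : ∀ y, u y = ⨆ i, f i y)
    (x : EuclideanSpace ℝ (Fin n)) :
    subdiff u x ⊆ convexHull ℝ (⋃ i ∈ {i | u x = f i x}, Ω i) := by
  have hmax : ∀ y, ∃ i, u y = f i y := fun y => by
    obtain ⟨i, hi⟩ := exists_eq_ciSup_of_finite (f := fun i => f i y)
    exact ⟨i, (hu y).trans hi.symm⟩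
  have hle : ∀ i y, f i y ≤ u y := fun i y => by
    rw [hu]
    exact le_ciSup (Finite.bddAbove_range fun i => f i y) i
  intro p hp
  by_contra hpU
  obtain ⟨l, s, hlU, hlp⟩ := geometric_hahn_banach_closed_point (convex_convexHull ℝ _)
    ((toFinite _).isCompact_biUnion fun i _ => hΩ i).convexHull.isClosed hpU
  set d := (InnerProductSpace.toDual ℝ _).symm l
  have hinner (v : EuclideanSpace ℝ (Fin n)) (t : ℝ) : inner ℝ v (t • d) = t * l v := by
    rw [real_inner_smul_right, real_inner_comm, InnerProductSpace.toDual_symm_apply]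
  have hpath : Tendsto (fun t : ℝ => x + t • d) (𝓝[>] 0) (𝓝 x) :=
    ((continuous_const.add (continuous_id.smul continuous_const)).tendsto' 0 x (by simp)).mono_left
      nhdsWithin_le_nhds
  obtain ⟨m, hm⟩ := hmax x
  obtain ⟨t, hact, ht⟩ := ((hpath.eventually (eventually_eq_imp_eq_of_le
    (fun i => (hf i).continuousAt) hle hm)).and self_mem_nhdsWithin).exists
  obtain ⟨j, hj⟩ := hmax (x + t • d)
  obtain ⟨q, hq, hqΩ⟩ := hsub j (x + t • d)
  have hpy := hp (x + t • d)
  have hqx := hq x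
  rw [add_sub_cancel_left, hinner] at hpy
  rw [sub_add_cancel_left, inner_neg_right, hinner] at hqx
  -- `u x + t l(p) ≤ u (x + t d) = f j (x + t d) ≤ f j x + t l(q) = u x + t l(q)`,
  -- yet `l q < s < l p`
  have hlq : l q < s := hlU q (subset_convexHull ℝ _ (mem_biUnion (hact j hj) hqΩ))
  nlinarith [mul_pos (mem_Ioi.1 ht) (sub_pos.2 (hlq.trans hlp)), hact j hj]

theorem multiplicity_covered_by_tears_general (n K : ℕ)
    (uu : Fin K → EuclideanSpace ℝ (Fin n) → ℝ)
    (Ω : Fin K → Set (EuclideanSpace ℝ (Fin n)))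
    (hconv : ∀ i, ConvexOn ℝ univ (uu i))
    (hcomp : ∀ i, IsCompact (Ω i))
    (hgrad : ∀ i x, DifferentiableAt ℝ (uu i) x → gradient (uu i) x ∈ Ω i)
    (u : EuclideanSpace ℝ (Fin n) → ℝ) (hu : ∀ x, u x = ⨆ i, uu i x)
    (k : ℕ)
    (hai : ∀ I' : Finset (Fin K), I'.card = k →
      ∀ p : I' → EuclideanSpace ℝ (Fin n),
        (∀ i, p i ∈ convexHull ℝ (Ω i.1)) → AffineIndependent ℝ p) :
    ∀ x, k ≤ mult u Ω x →
      ∃ I' : Finset (Fin K), I'.card = k ∧ ∀ i ∈ I', u x = uu i x := by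
  classical
  intro x hx
  set A := Finset.univ.filter fun j => u x = uu j x
  suffices hA : k ≤ A.card by
    obtain ⟨I', hI'A, hI'⟩ := Finset.exists_subset_card_eq hA
    exact ⟨I', hI', fun i hi => (Finset.mem_filter.1 (hI'A hi)).2⟩
  set S := {i | (subdiff u x ∩ Ω i).Nonempty}.toFinset
  have hkS : k ≤ S.card := by rwa [mult, ncard_eq_toFinset_card'] at hx
  by_cases hSA : S ⊆ A
  · exact hkS.trans (Finset.card_le_card hSA)
  obtain ⟨i, hiS, hiA⟩ := Finset.not_subset.1 hSA
  obtain ⟨p, hpu, hpΩ⟩ := mem_toFinset.1 hiS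
  have : Nonempty (Fin K) := ⟨i⟩
  have hsub := fun j => (hconv j).subdiff_inter_nonempty (hcomp j) (hgrad j)
  have hΩ := fun j => (hsub j x).mono inter_subset_right
  have hpA : p ∈ convexHull ℝ (⋃ j ∈ A, Ω j) := by
    simpa [A] using subdiff_subset_convexHull_biUnion
      (fun j => (hconv j).locallyLipschitz.continuous) hcomp hsub hu x hpu
  obtain ⟨q, hq, hpq⟩ := exists_mem_convexHull_image_of_mem_convexHull_biUnion (fun j _ => hΩ j) hpA
  exact le_card_of_mem_convexHull_image hΩ (hkS.trans (Finset.card_le_univ S)) hai hq hiA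
    (subset_convexHull ℝ _ hpΩ) hpq

/-- Covering multiplicity sets with tears: if every `k`-element subcollection of the convex
hulls `ch(Ω̄ i)` is affinely independent, then every point of multiplicity at least `k` lies
in some coincidence set `Σ↑_{I'} = {x : u(x) = uᵢ(x) ∀ i ∈ I'}` with `#I' = k`. -/
theorem multiplicity_covered_by_tears (n K : ℕ) (hK : 0 < K)
    (uu : Fin K → EuclideanSpace ℝ (Fin n) → ℝ)
    (Ω : Fin K → Set (EuclideanSpace ℝ (Fin n)))
    (hconv : ∀ i, ConvexOn ℝ univ (uu i))
    (hcomp : ∀ i, IsCompact (Ω i))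
    (hdisj : Pairwise (Function.onFun Disjoint Ω))
    (hgrad : ∀ i x, DifferentiableAt ℝ (uu i) x → gradient (uu i) x ∈ Ω i)
    (u : EuclideanSpace ℝ (Fin n) → ℝ) (hu : ∀ x, u x = ⨆ i, uu i x)
    (k : ℕ) (hk : 1 ≤ k)
    (hai : ∀ I' : Finset (Fin K), I'.card = k →
      ∀ p : I' → EuclideanSpace ℝ (Fin n),
        (∀ i, p i ∈ convexHull ℝ (Ω i.1)) → AffineIndependent ℝ p) :
    ∀ x, k ≤ mult u Ω x →
      ∃ I' : Finset (Fin K), I'.card = k ∧ ∀ i ∈ I', u x = uu i x :=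
  multiplicity_covered_by_tears_general n K uu Ω hconv hcomp hgrad u hu k hai
end
end
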